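/- arXiv:1002.1631 — 4 statements merged into one kernel-verified Lean document; each statement's English description precedes it below -/
import Mathlib

section
/- Let σ be an oriented p-simplex with barycentric coordinates λ_0,…,λ_p, let σ' be the face with coordinates λ_0,…,λ_{p-1} (the face opposite the vertex a_p), and let ω(σ';σ) = (p-1)! Σ_{i=0}^{p-1} (-1)^i λ_i dλ_0 ∧ ⋯ ∧ \widehat{dλ_i} ∧ ⋯ ∧ dλ_{p-1} be the canonical extension of the Whitney form of σ' to σ. Then d ω(σ';σ) = (-1)^p ω(σ), where (-1)^p is the incidence number [σ;σ']. -/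
open scoped BigOperators

variable {E : Type*} [NormedAddCommGroup E] [NormedSpace ℝ E]

/-- The Whitney form of the ordered tuple of barycentric coordinate functions
`lam 0, …, lam p` : the `p`-form
`ω = p! Σ_i (-1)^i λ_i dλ_0 ∧ ⋯ ∧ \widehat{dλ_i} ∧ ⋯ ∧ dλ_p`,
evaluated at a point `x` on the tuple of vectors `v`. -/
noncomputable def whitneyForm {p : ℕ} (lam : Fin (p + 1) → E → ℝ) (x : E)
    (v : Fin p → E) : ℝ :=
  (Nat.factorial p : ℝ) *
    ∑ i : Fin (p + 1), (-1 : ℝ) ^ (i : ℕ) * lam i x *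
      Matrix.det (Matrix.of fun r c : Fin p => fderiv ℝ (lam (i.succAbove r)) x (v c))

/-- Exterior derivative of a concrete `k`-form (a function of a point and of `k` vectors),
evaluated on constant vector fields:
`(dω)(v_0,…,v_k) = Σ_i (-1)^i ∂_{v_i} (y ↦ ω(y)(v_0,…,\widehat{v_i},…,v_k))`. -/
noncomputable def extDerivAt {k : ℕ} (ω : E → (Fin k → E) → ℝ) (x : E)
    (v : Fin (k + 1) → E) : ℝ :=
  ∑ i : Fin (k + 1), (-1 : ℝ) ^ (i : ℕ) *
    fderiv ℝ (fun y => ω y fun j => v (i.succAbove j)) x (v i)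

namespace WhitneyAux

lemma val_succAbove {n : ℕ} (k : Fin (n + 1)) (c : Fin n) :
    ((k.succAbove c : Fin (n + 1)) : ℕ) = if (c : ℕ) < (k : ℕ) then (c : ℕ) else (c : ℕ) + 1 := by
  rcases lt_or_ge (c : ℕ) (k : ℕ) with h | h
  · rw [Fin.succAbove_of_castSucc_lt _ _ (by simpa [Fin.lt_def] using h)]
    simp [h]
  · rw [Fin.succAbove_of_le_castSucc _ _ (by simpa [Fin.le_def] using h)]
    simp [Nat.not_lt.2 h]

def psw {m : ℕ} (kc : Fin (m + 2) × Fin (m + 1)) : Fin (m + 2) × Fin (m + 1) :=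
  if h : (kc.2 : ℕ) < (kc.1 : ℕ) then
    (kc.1.succAbove kc.2, ⟨(kc.1 : ℕ) - 1, by have := kc.1.2; omega⟩)
  else
    (kc.1.succAbove kc.2, ⟨(kc.1 : ℕ), by have := kc.2.2; omega⟩)

lemma psw_fst {m : ℕ} (kc : Fin (m + 2) × Fin (m + 1)) :
    (psw kc).1 = kc.1.succAbove kc.2 := by
  unfold psw; split_ifs <;> rfl

lemma psw_snd_val {m : ℕ} (kc : Fin (m + 2) × Fin (m + 1)) :
    ((psw kc).2 : ℕ) = if (kc.2 : ℕ) < (kc.1 : ℕ) then (kc.1 : ℕ) - 1 else (kc.1 : ℕ) := by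
  unfold psw; split_ifs <;> rfl

lemma psw_fst_val {m : ℕ} (kc : Fin (m + 2) × Fin (m + 1)) :
    ((psw kc).1 : ℕ) = if (kc.2 : ℕ) < (kc.1 : ℕ) then (kc.2 : ℕ) else (kc.2 : ℕ) + 1 := by
  rw [psw_fst, val_succAbove]

lemma psw_succAbove {m : ℕ} (kc : Fin (m + 2) × Fin (m + 1)) :
    (psw kc).1.succAbove (psw kc).2 = kc.1 := by
  apply Fin.ext
  rw [val_succAbove, psw_fst_val, psw_snd_val]
  have h1 := kc.1.2
  have h2 := kc.2.2
  split_ifs <;> omega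

lemma psw_psw {m : ℕ} (kc : Fin (m + 2) × Fin (m + 1)) : psw (psw kc) = kc := by
  have h1 := kc.1.2
  have h2 := kc.2.2
  refine Prod.ext ?_ (Fin.ext ?_)
  · rw [psw_fst, psw_succAbove]
  · rw [psw_snd_val, psw_fst_val, psw_snd_val]
    split_ifs <;> omega

lemma psw_comp {m : ℕ} (kc : Fin (m + 2) × Fin (m + 1)) (t : Fin m) :
    (psw kc).1.succAbove ((psw kc).2.succAbove t) = kc.1.succAbove (kc.2.succAbove t) := by
  apply Fin.ext
  rw [val_succAbove, val_succAbove, val_succAbove, val_succAbove, psw_fst_val, psw_snd_val]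
  have h1 := kc.1.2
  have h2 := kc.2.2
  have h3 := t.2
  split_ifs <;> omega

lemma psw_sign {m : ℕ} (kc : Fin (m + 2) × Fin (m + 1)) :
    (-1 : ℝ) ^ (((psw kc).1 : ℕ) + ((psw kc).2 : ℕ)) = -(-1 : ℝ) ^ ((kc.1 : ℕ) + (kc.2 : ℕ)) := by
  have key : ((psw kc).1 : ℕ) + ((psw kc).2 : ℕ) + 1 = (kc.1 : ℕ) + (kc.2 : ℕ) ∨
      ((psw kc).1 : ℕ) + ((psw kc).2 : ℕ) = (kc.1 : ℕ) + (kc.2 : ℕ) + 1 := by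
    rw [psw_fst_val, psw_snd_val]
    have h1 := kc.1.2
    have h2 := kc.2.2
    split_ifs <;> omega
  rcases key with h | h
  · rw [← h, pow_succ]; ring
  · rw [h, pow_succ]; ring

lemma lemP {m : ℕ} (q : Fin (m + 2) → Fin (m + 2) → ℝ) (hq : ∀ i j, q i j = q j i)
    (N : (Fin m → Fin (m + 2)) → ℝ) :
    ∑ k : Fin (m + 2), ∑ c : Fin (m + 1),
      (-1 : ℝ) ^ ((k : ℕ) + (c : ℕ)) * q k (k.succAbove c) *
        N (fun t => k.succAbove (c.succAbove t)) = 0 := by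
  rw [← Finset.sum_product']
  refine Finset.sum_involution (fun kc _ => psw kc) ?_ ?_ (fun kc _ => Finset.mem_univ _) ?_
  · intro kc _
    have h2 : (fun t => (psw kc).1.succAbove ((psw kc).2.succAbove t)) =
        fun t => kc.1.succAbove (kc.2.succAbove t) := funext (psw_comp kc)
    rw [psw_succAbove kc, h2, psw_sign kc, psw_fst kc, hq (kc.1.succAbove kc.2) kc.1]
    ring
  · intro kc _ _ heq
    exact Fin.succAbove_ne kc.1 kc.2 ((psw_fst kc).symm.trans (congrArg Prod.fst heq))
  · intro kc _
    exact psw_psw kc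


variable {E : Type*} [NormedAddCommGroup E] [NormedSpace ℝ E]


noncomputable def detCM (m : ℕ) : ContinuousMultilinearMap ℝ (fun _ : Fin m => (Fin m → ℝ)) ℝ :=
  ∑ σ : Equiv.Perm (Fin m), (Equiv.Perm.sign σ : ℤ) •
    (ContinuousMultilinearMap.mkPiAlgebra ℝ (Fin m) ℝ).compContinuousLinearMap
      fun i => ContinuousLinearMap.proj (σ i)

lemma detCM_apply {m : ℕ} (g : Fin m → Fin m → ℝ) :
    detCM m g = Matrix.det (Matrix.of g) := by
  rw [← Matrix.det_transpose, Matrix.det_apply]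
  simp only [detCM, ContinuousMultilinearMap.sum_apply, ContinuousMultilinearMap.smul_apply,
    ContinuousMultilinearMap.compContinuousLinearMap_apply,
    ContinuousMultilinearMap.mkPiAlgebra_apply, ContinuousLinearMap.proj_apply,
    Matrix.transpose_apply, Matrix.of_apply, zsmul_eq_mul, Units.smul_def]

lemma hasFDerivAt_det_rows {m : ℕ} (g : Fin m → E → (Fin m → ℝ))
    (g' : Fin m → E →L[ℝ] (Fin m → ℝ)) {x : E} (hg : ∀ i, HasFDerivAt (g i) (g' i) x) :
    ∃ L : E →L[ℝ] ℝ, HasFDerivAt (fun y => Matrix.det (Matrix.of fun i => g i y)) L x ∧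
      ∀ u, L u = ∑ i, Matrix.det ((Matrix.of fun i => g i x).updateRow i (g' i u)) := by
  classical
  refine ⟨∑ i : Fin m, ((detCM m).toContinuousLinearMap (fun j => g j x) i).comp (g' i), ?_, ?_⟩
  · have h := HasFDerivAt.multilinear_comp (detCM m) hg
    have hfun : (fun y => Matrix.det (Matrix.of fun i => g i y)) =
        fun y => detCM m (fun i => g i y) := by
      funext y; rw [detCM_apply]
    rw [hfun]
    exact h
  · intro u
    rw [ContinuousLinearMap.sum_apply]
    refine Finset.sum_congr rfl fun i _ => ?_
    rw [ContinuousLinearMap.comp_apply, ContinuousMultilinearMap.toContinuousLinearMap_apply,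
      detCM_apply]
    rfl

lemma whitneyForm_eq_det' {p : ℕ} (lam : Fin (p + 1) → E → ℝ) (x : E) (v : Fin p → E)
    (f : ℝ) (hf : f = (p.factorial : ℝ)) :
    f * ∑ i : Fin (p + 1), (-1 : ℝ) ^ (i : ℕ) * lam i x *
        Matrix.det (Matrix.of fun r c : Fin p => fderiv ℝ (lam (i.succAbove r)) x (v c)) =
      f * Matrix.det (Matrix.of fun i j =>
        Fin.cases (lam i x) (fun c => fderiv ℝ (lam i) x (v c)) j) := by
  rw [Matrix.det_succ_column_zero]
  congr 1

lemma lemZ {m : ℕ} (r : Fin (m + 1)) (a : Fin (m + 1) → ℝ) (W : Fin (m + 1) → Fin (m + 1) → ℝ)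
    (q : Fin (m + 1) → Fin (m + 1) → ℝ) (hq : ∀ i j, q i j = q j i) :
    ∑ k : Fin (m + 1), (-1 : ℝ) ^ (k : ℕ) *
      Matrix.det ((Matrix.of fun i j =>
          Fin.cases (a i) (fun c => W i (k.succAbove c)) j).updateRow r
        (fun j => Fin.cases 0 (fun c => q k (k.succAbove c)) j)) = 0 := by
  cases m with
  | zero =>
    refine Finset.sum_eq_zero fun k _ => ?_
    have hr : r = 0 := Fin.ext (by omega)
    subst hr
    simp [Matrix.det_fin_one]
  | succ m' =>
    have hminor : ∀ (k : Fin (m' + 1 + 1)) (c : Fin (m' + 1)),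
        (((Matrix.of fun i j =>
            Fin.cases (a i) (fun c' => W i (k.succAbove c')) j :
              Matrix (Fin (m' + 1 + 1)) (Fin (m' + 1 + 1)) ℝ)).updateRow r
          (fun j => Fin.cases 0 (fun c' => q k (k.succAbove c')) j)).submatrix
            r.succAbove (c.succ).succAbove
        = (Matrix.of fun i' j' => Fin.cases (a (r.succAbove i'))
            (fun t => W (r.succAbove i') (k.succAbove (c.succAbove t))) j' :
              Matrix (Fin (m' + 1)) (Fin (m' + 1)) ℝ) := by
      intro k c
      ext i' j'
      rw [Matrix.submatrix_apply, Matrix.updateRow_ne (Fin.succAbove_ne r i')]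
      refine Fin.cases ?_ (fun t => ?_) j' <;> simp
    have hdet : ∀ k : Fin (m' + 1 + 1),
        Matrix.det (((Matrix.of fun i j =>
            Fin.cases (a i) (fun c' => W i (k.succAbove c')) j :
              Matrix (Fin (m' + 1 + 1)) (Fin (m' + 1 + 1)) ℝ)).updateRow r
          (fun j => Fin.cases 0 (fun c' => q k (k.succAbove c')) j))
        = ∑ c : Fin (m' + 1), (-1 : ℝ) ^ ((r : ℕ) + ((c : ℕ) + 1)) * q k (k.succAbove c) *
            Matrix.det ((Matrix.of fun i' j' => Fin.cases (a (r.succAbove i'))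
              (fun t => W (r.succAbove i') (k.succAbove (c.succAbove t))) j' :
                Matrix (Fin (m' + 1)) (Fin (m' + 1)) ℝ)) := by
      intro k
      rw [Matrix.det_succ_row _ r, Fin.sum_univ_succ]
      simp only [Matrix.updateRow_self, Fin.cases_zero, Fin.cases_succ, mul_zero, zero_mul,
        zero_add, Fin.val_succ, hminor k]
    simp_rw [hdet]
    have h0 := lemP q hq (fun φ => Matrix.det ((Matrix.of fun i' j' =>
      Fin.cases (a (r.succAbove i')) (fun t => W (r.succAbove i') (φ t)) j' :
        Matrix (Fin (m' + 1)) (Fin (m' + 1)) ℝ)))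
    simp only at h0
    calc ∑ k : Fin (m' + 1 + 1), (-1 : ℝ) ^ (k : ℕ) *
          ∑ c : Fin (m' + 1), (-1 : ℝ) ^ ((r : ℕ) + ((c : ℕ) + 1)) * q k (k.succAbove c) *
            Matrix.det ((Matrix.of fun i' j' => Fin.cases (a (r.succAbove i'))
              (fun t => W (r.succAbove i') (k.succAbove (c.succAbove t))) j' :
                Matrix (Fin (m' + 1)) (Fin (m' + 1)) ℝ))
        = (-1 : ℝ) ^ ((r : ℕ) + 1) * ∑ k : Fin (m' + 1 + 1), ∑ c : Fin (m' + 1),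
            (-1 : ℝ) ^ ((k : ℕ) + (c : ℕ)) * q k (k.succAbove c) *
              Matrix.det ((Matrix.of fun i' j' => Fin.cases (a (r.succAbove i'))
                (fun t => W (r.succAbove i') (k.succAbove (c.succAbove t))) j' :
                  Matrix (Fin (m' + 1)) (Fin (m' + 1)) ℝ)) := by
          rw [Finset.mul_sum]
          refine Finset.sum_congr rfl fun k _ => ?_
          rw [Finset.mul_sum, Finset.mul_sum]
          refine Finset.sum_congr rfl fun c _ => ?_
          simp only [pow_add, pow_one]
          ring
      _ = 0 := by rw [h0, mul_zero]


end WhitneyAux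

open WhitneyAux

/-- for a `(p+1)`-simplex `σ` with barycentric coordinates
`λ_0,…,λ_{p+1}` (smooth functions summing to `1` on an open set), and `σ'` the face
with coordinates `λ_0,…,λ_p` (opposite the last vertex), the canonical extension
`ω(σ';σ)` of the Whitney form of `σ'` satisfies `d ω(σ';σ) = (-1)^{p+1} ω(σ)`,
where `(-1)^{p+1}` is the incidence number `[σ;σ']`. -/
theorem extDeriv_whitneyFaceExt {p : ℕ} (lam : Fin (p + 2) → E → ℝ) (s : Set E)
    (hs : IsOpen s) (hsmooth : ∀ i, ContDiffOn ℝ (⊤ : ℕ∞) (lam i) s)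
    (hsum : ∀ y ∈ s, ∑ i, lam i y = 1) (x : E) (hx : x ∈ s)
    (v : Fin (p + 1) → E) :
    extDerivAt (whitneyForm fun i : Fin (p + 1) => lam i.castSucc) x v =
      (-1 : ℝ) ^ (p + 1) * whitneyForm lam x v := by
  classical
  have hsub : s ∈ nhds x := hs.mem_nhds hx
  have hdiffAt : ∀ (i : Fin (p + 2)) {y : E}, y ∈ s → DifferentiableAt ℝ (lam i) y := by
    intro i y hy
    exact ((hsmooth i).differentiableOn (by simp)).differentiableAt (hs.mem_nhds hy)
  have hf' : ∀ i : Fin (p + 2), HasFDerivAt (lam i) (fderiv ℝ (lam i) x) x :=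
    fun i => (hdiffAt i hx).hasFDerivAt
  have hfd2 : ∀ i : Fin (p + 2),
      HasFDerivAt (fderiv ℝ (lam i)) (fderiv ℝ (fderiv ℝ (lam i)) x) x := by
    intro i
    have h1 : ContDiffOn ℝ (⊤ : ℕ∞) (fderiv ℝ (lam i)) s :=
      (hsmooth i).fderiv_of_isOpen hs (by simp)
    exact ((h1.differentiableOn (by simp)).differentiableAt hsub).hasFDerivAt
  have hsymm : ∀ (i : Fin (p + 2)) (a b : E),
      fderiv ℝ (fderiv ℝ (lam i)) x a b = fderiv ℝ (fderiv ℝ (lam i)) x b a := by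
    intro i a b
    refine second_derivative_symmetric_of_eventually (f := lam i) ?_ (hfd2 i) a b
    filter_upwards [hsub] with y hy
    exact (hdiffAt i hy).hasFDerivAt
  have hsumd : (∑ i, fderiv ℝ (lam i) x) = (0 : E →L[ℝ] ℝ) := by
    have h1 : fderiv ℝ (fun y => ∑ i, lam i y) x = 0 := by
      have he : (fun y => ∑ i, lam i y) =ᶠ[nhds x] fun _ => (1 : ℝ) :=
        Filter.eventuallyEq_of_mem hsub hsum
      rw [he.fderiv_eq]
      exact fderiv_const_apply 1
    rw [← h1, fderiv_fun_sum (fun i _ => hdiffAt i hx)]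
  set M : Matrix (Fin (p + 1)) (Fin (p + 1)) ℝ :=
    Matrix.of fun i c => fderiv ℝ (lam i.castSucc) x (v c) with hMdef
  -- the right-hand side
  have hwv : whitneyForm lam x v =
      ((p + 1).factorial : ℝ) * ((-1 : ℝ) ^ (p + 1) * M.det) := by
    simp only [whitneyForm]
    rw [whitneyForm_eq_det' lam x v _ rfl]
    congr 1
    set D : Matrix (Fin (p + 2)) (Fin (p + 2)) ℝ :=
      Matrix.of fun i j => Fin.cases (lam i x) (fun c => fderiv ℝ (lam i) x (v c)) j with hD
    have hlast : D (Fin.last (p + 1)) =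
        (fun j => Fin.cases (1 : ℝ) (fun _ => 0) j) - ∑ i : Fin (p + 1), D i.castSucc := by
      funext j
      refine Fin.cases ?_ (fun c => ?_) j
      · have h1 := hsum x hx
        rw [Fin.sum_univ_castSucc] at h1
        simp only [hD, Matrix.of_apply, Fin.cases_zero, Pi.sub_apply, Finset.sum_apply]
        linarith
      · have h2 : (∑ i : Fin (p + 2), fderiv ℝ (lam i) x) (v c) = 0 := by rw [hsumd]; rfl
        rw [ContinuousLinearMap.sum_apply, Fin.sum_univ_castSucc] at h2
        simp only [hD, Matrix.of_apply, Fin.cases_succ, Pi.sub_apply, Finset.sum_apply]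
        linarith
    set L : (Fin (p + 2) → ℝ) →ₗ[ℝ] ℝ :=
      (Matrix.detRowAlternating : (Fin (p + 2) → ℝ) [⋀^Fin (p + 2)]→ₗ[ℝ] ℝ).toMultilinearMap.toLinearMap
        D (Fin.last (p + 1)) with hLdef
    have hL : ∀ z, Matrix.det (D.updateRow (Fin.last (p + 1)) z) = L z := fun z => rfl
    have hzero : ∀ i : Fin (p + 1), L (D i.castSucc) = 0 := by
      intro i
      rw [← hL]
      exact Matrix.det_updateRow_eq_zero (Fin.castSucc_lt_last i).ne
    have hLe : L (fun j => Fin.cases (1 : ℝ) (fun _ => 0) j) = (-1 : ℝ) ^ (p + 1) * M.det := by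
      rw [← hL, Matrix.det_succ_row _ (Fin.last (p + 1)), Fin.sum_univ_succ]
      have hmin : ((D.updateRow (Fin.last (p + 1))
            (fun j => Fin.cases (1 : ℝ) (fun _ => 0) j)).submatrix
              (Fin.last (p + 1)).succAbove (0 : Fin (p + 2)).succAbove) = M := by
        ext r c
        rw [Matrix.submatrix_apply, Fin.succAbove_last, Fin.zero_succAbove,
          Matrix.updateRow_ne (Fin.castSucc_lt_last r).ne]
        simp [hD, hMdef]
      rw [hmin]
      simp only [Matrix.updateRow_self, Fin.cases_zero, Fin.cases_succ, mul_zero, zero_mul,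
        mul_one, Fin.val_last, Fin.val_zero, add_zero, Fin.val_succ]
      rw [Finset.sum_eq_zero fun c _ => by simp]
      ring
    calc D.det = Matrix.det (D.updateRow (Fin.last (p + 1)) (D (Fin.last (p + 1)))) := by
          rw [Matrix.updateRow_eq_self]
      _ = L ((fun j => Fin.cases (1 : ℝ) (fun _ => 0) j) - ∑ i : Fin (p + 1), D i.castSucc) := by
          rw [hL, hlast]
      _ = L (fun j => Fin.cases (1 : ℝ) (fun _ => 0) j) - ∑ i : Fin (p + 1), L (D i.castSucc) := by
          rw [map_sub, map_sum]
      _ = (-1 : ℝ) ^ (p + 1) * M.det := by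
          rw [hLe, Finset.sum_eq_zero fun i _ => hzero i, sub_zero]
  -- the per-k derivative
  have hterm : ∀ k : Fin (p + 1),
      fderiv ℝ (fun y => whitneyForm (fun i : Fin (p + 1) => lam i.castSucc) y
          fun j => v (k.succAbove j)) x (v k)
      = (p.factorial : ℝ) * ∑ r : Fin (p + 1),
          ((-1 : ℝ) ^ (r : ℕ) * M r k * (M.submatrix r.succAbove k.succAbove).det
            + Matrix.det (((Matrix.of fun i j =>
                Fin.cases (lam i.castSucc x)
                  (fun c => fderiv ℝ (lam i.castSucc) x (v (k.succAbove c))) j :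
                  Matrix (Fin (p + 1)) (Fin (p + 1)) ℝ)).updateRow r
                (fun j => Fin.cases 0 (fun c =>
                  fderiv ℝ (fderiv ℝ (lam r.castSucc)) x (v k) (v (k.succAbove c))) j))) := by
    intro k
    set g : Fin (p + 1) → E → (Fin (p + 1) → ℝ) := fun i y j =>
      Fin.cases (lam i.castSucc y)
        (fun c => fderiv ℝ (lam i.castSucc) y (v (k.succAbove c))) j with hg
    set g' : Fin (p + 1) → E →L[ℝ] (Fin (p + 1) → ℝ) := fun i =>
      ContinuousLinearMap.pi fun j =>
        Fin.cases (fderiv ℝ (lam i.castSucc) x)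
          (fun c => (ContinuousLinearMap.apply ℝ ℝ (v (k.succAbove c))).comp
            (fderiv ℝ (fderiv ℝ (lam i.castSucc)) x)) j with hg'
    have hgd : ∀ i, HasFDerivAt (g i) (g' i) x := by
      intro i
      apply hasFDerivAt_pi.2
      intro j
      refine Fin.cases ?_ (fun c => ?_) j
      · exact hf' i.castSucc
      · exact (ContinuousLinearMap.apply ℝ ℝ (v (k.succAbove c))).hasFDerivAt.comp x
          (hfd2 i.castSucc)
    obtain ⟨L, hL, hLu⟩ := hasFDerivAt_det_rows g g' hgd
    have hfun : (fun y => whitneyForm (fun i : Fin (p + 1) => lam i.castSucc) y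
        fun j => v (k.succAbove j)) = fun y => (p.factorial : ℝ) *
          Matrix.det (Matrix.of fun i => g i y) := by
      funext y
      simp only [whitneyForm]
      rw [whitneyForm_eq_det' (fun i : Fin (p + 1) => lam i.castSucc) y
        (fun j => v (k.succAbove j)) _ rfl]
    rw [hfun]
    have hL2 : HasFDerivAt (fun y => (p.factorial : ℝ) * Matrix.det (Matrix.of fun i => g i y))
        ((p.factorial : ℝ) • L) x := hL.const_mul _
    rw [hL2.fderiv, ContinuousLinearMap.smul_apply, smul_eq_mul]
    congr 1
    rw [hLu]
    refine Finset.sum_congr rfl fun r _ => ?_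
    have hrow : g' r (v k) =
        (fun j => Fin.cases (fderiv ℝ (lam r.castSucc) x (v k)) (fun _ => 0) j)
          + (fun j => Fin.cases 0 (fun c =>
              fderiv ℝ (fderiv ℝ (lam r.castSucc)) x (v k) (v (k.succAbove c))) j) := by
      funext j
      refine Fin.cases ?_ (fun c => ?_) j <;>
        simp [hg', ContinuousLinearMap.pi_apply]
    rw [hrow, Matrix.det_updateRow_add]
    congr 1
    · rw [Matrix.det_succ_row _ r, Fin.sum_univ_succ]
      have hmin : (((Matrix.of fun i => g i x).updateRow r
            (fun j => Fin.cases (fderiv ℝ (lam r.castSucc) x (v k)) (fun _ => 0) j)).submatrix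
              r.succAbove (0 : Fin (p + 1)).succAbove) = M.submatrix r.succAbove k.succAbove := by
        ext a b
        rw [Matrix.submatrix_apply, Fin.zero_succAbove,
          Matrix.updateRow_ne (Fin.succAbove_ne r a), Matrix.submatrix_apply]
        simp [hg, hMdef]
      rw [hmin]
      simp only [Matrix.updateRow_self, Fin.cases_zero, Fin.cases_succ, mul_zero, zero_mul,
        Fin.val_zero, add_zero, Fin.val_succ]
      rw [Finset.sum_eq_zero fun c _ => by simp]
      have hMrk : M r k = fderiv ℝ (lam r.castSucc) x (v k) := rfl
      rw [hMrk]
      ring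
  -- assemble
  simp only [extDerivAt]
  have hB : ∀ r : Fin (p + 1), (∑ k : Fin (p + 1), (-1 : ℝ) ^ (k : ℕ) *
      Matrix.det (((Matrix.of fun i j =>
          Fin.cases (lam i.castSucc x)
            (fun c => fderiv ℝ (lam i.castSucc) x (v (k.succAbove c))) j :
            Matrix (Fin (p + 1)) (Fin (p + 1)) ℝ)).updateRow r
          (fun j => Fin.cases 0 (fun c =>
            fderiv ℝ (fderiv ℝ (lam r.castSucc)) x (v k) (v (k.succAbove c))) j))) = 0 := by
    intro r
    have := lemZ r (fun i => lam i.castSucc x)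
      (fun i j => fderiv ℝ (lam i.castSucc) x (v j))
      (fun a b => fderiv ℝ (fderiv ℝ (lam r.castSucc)) x (v a) (v b))
      (fun a b => hsymm r.castSucc (v a) (v b))
    simpa using this
  have hA : ∀ r : Fin (p + 1), (∑ k : Fin (p + 1),
      (-1 : ℝ) ^ ((r : ℕ) + (k : ℕ)) * M r k * (M.submatrix r.succAbove k.succAbove).det)
        = M.det := fun r => (Matrix.det_succ_row M r).symm
  have hsq : ((-1 : ℝ) ^ (p + 1)) * ((-1 : ℝ) ^ (p + 1)) = 1 := by
    rw [← pow_add]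
    exact Even.neg_one_pow ⟨p + 1, by ring⟩
  calc ∑ k : Fin (p + 1), (-1 : ℝ) ^ (k : ℕ) *
        fderiv ℝ (fun y => whitneyForm (fun i : Fin (p + 1) => lam i.castSucc) y
          fun j => v (k.succAbove j)) x (v k)
      = ∑ k : Fin (p + 1), ∑ r : Fin (p + 1),
          ((p.factorial : ℝ) * ((-1 : ℝ) ^ ((r : ℕ) + (k : ℕ)) * M r k *
              (M.submatrix r.succAbove k.succAbove).det)
            + (p.factorial : ℝ) * ((-1 : ℝ) ^ (k : ℕ) *
              Matrix.det (((Matrix.of fun i j =>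
                Fin.cases (lam i.castSucc x)
                  (fun c => fderiv ℝ (lam i.castSucc) x (v (k.succAbove c))) j :
                  Matrix (Fin (p + 1)) (Fin (p + 1)) ℝ)).updateRow r
                (fun j => Fin.cases 0 (fun c =>
                  fderiv ℝ (fderiv ℝ (lam r.castSucc)) x (v k) (v (k.succAbove c))) j)))) := by
        refine Finset.sum_congr rfl fun k _ => ?_
        rw [hterm k, Finset.mul_sum, Finset.mul_sum]
        refine Finset.sum_congr rfl fun r _ => ?_
        simp only [pow_add]
        ring
    _ = ∑ r : Fin (p + 1), ∑ k : Fin (p + 1),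
          ((p.factorial : ℝ) * ((-1 : ℝ) ^ ((r : ℕ) + (k : ℕ)) * M r k *
              (M.submatrix r.succAbove k.succAbove).det)
            + (p.factorial : ℝ) * ((-1 : ℝ) ^ (k : ℕ) *
              Matrix.det (((Matrix.of fun i j =>
                Fin.cases (lam i.castSucc x)
                  (fun c => fderiv ℝ (lam i.castSucc) x (v (k.succAbove c))) j :
                  Matrix (Fin (p + 1)) (Fin (p + 1)) ℝ)).updateRow r
                (fun j => Fin.cases 0 (fun c =>
                  fderiv ℝ (fderiv ℝ (lam r.castSucc)) x (v k) (v (k.succAbove c))) j)))) :=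
        Finset.sum_comm
    _ = ∑ r : Fin (p + 1), (p.factorial : ℝ) * M.det := by
        refine Finset.sum_congr rfl fun r _ => ?_
        rw [Finset.sum_add_distrib, ← Finset.mul_sum, ← Finset.mul_sum, hA r, hB r, mul_zero,
          add_zero]
    _ = ((p : ℝ) + 1) * ((p.factorial : ℝ) * M.det) := by
        rw [Finset.sum_const, Finset.card_univ, Fintype.card_fin, nsmul_eq_mul]
        push_cast
        ring
    _ = (-1 : ℝ) ^ (p + 1) * whitneyForm lam x v := by
        rw [hwv, show ((p + 1).factorial : ℝ) = ((p : ℝ) + 1) * (p.factorial : ℝ) by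
          push_cast [Nat.factorial_succ]; ring]
        calc ((p : ℝ) + 1) * ((p.factorial : ℝ) * M.det)
            = (((-1 : ℝ) ^ (p + 1)) * ((-1 : ℝ) ^ (p + 1))) *
              (((p : ℝ) + 1) * ((p.factorial : ℝ) * M.det)) := by rw [hsq, one_mul]
          _ = (-1 : ℝ) ^ (p + 1) * (((p : ℝ) + 1) * (p.factorial : ℝ) *
              ((-1 : ℝ) ^ (p + 1) * M.det)) := by ring
end

section
/- Let σ be an oriented r-simplex with faces σ'_1,…,σ'_{r+1} of codimension 1 and incidence numbers [σ;σ'_i]. Define the (r-1)-form ∫ω(σ) = (1/(r+1)) Σ_{i=1}^{r+1} [σ;σ'_i] ω(σ'_i;σ), where ω(σ'_i;σ) denotes the canonical extension to σ of the Whitney form of σ'_i. Then d(∫ω(σ)) = ω(σ). -/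
open scoped BigOperators

variable {E : Type*} [NormedAddCommGroup E] [NormedSpace ℝ E]

namespace WhitneyAux

variable {E : Type*} [NormedAddCommGroup E] [NormedSpace ℝ E]

lemma coe_succAbove {n : ℕ} (k : Fin (n+1)) (c : Fin n) :
    ((k.succAbove c : Fin (n+1)) : ℕ) = if (c:ℕ) < (k:ℕ) then (c:ℕ) else (c:ℕ)+1 := by
  rcases Fin.lt_or_le c.castSucc k with h|h
  · have h' : (c:ℕ) < (k:ℕ) := by simpa [Fin.lt_def] using h
    rw [Fin.succAbove_of_castSucc_lt _ _ h]; simp [h']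
  · have h' : ¬ (c:ℕ) < (k:ℕ) := by simp [Fin.le_def] at h; omega
    rw [Fin.succAbove_of_le_castSucc _ _ h]; simp [h']

lemma sign_succAbove_antisymm {m : ℕ} (k : Fin (m+2)) (c : Fin (m+1)) (c' : Fin (m+1))
    (h : (k.succAbove c).succAbove c' = k) :
    (-1:ℝ)^((k:ℕ)+(c:ℕ)) = -(-1:ℝ)^(((k.succAbove c : Fin (m+2)):ℕ)+(c':ℕ)) := by
  have h1 := coe_succAbove k c
  have h2 := coe_succAbove (k.succAbove c) c'
  rw [h] at h2
  set K := (k:ℕ) with hK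
  set C := (c:ℕ) with hC
  set Lv := ((k.succAbove c : Fin (m+2)):ℕ) with hL
  set C' := (c':ℕ) with hC'
  split_ifs at h1 h2 with hc hc' hc'
  · exfalso; omega
  · rw [show K + C = (Lv + C') + 1 by omega, pow_succ]; ring
  · rw [show Lv + C' = (K + C) + 1 by omega, pow_succ]; ring
  · exfalso; omega

lemma succAbove_comp_symm {m : ℕ} (k l : Fin (m+2)) (c c' : Fin (m+1))
    (h1 : k.succAbove c = l) (h2 : l.succAbove c' = k) :
    k.succAbove ∘ c.succAbove = l.succAbove ∘ c'.succAbove := by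
  have im : ∀ (p : Fin (m+2)) (q : Fin (m+1)),
      p.succAbove '' {q}ᶜ = ({p, p.succAbove q}ᶜ : Set (Fin (m+2))) := by
    intro p q
    ext z
    simp only [Set.mem_image, Set.mem_compl_iff, Set.mem_singleton_iff, Set.mem_insert_iff,
      not_or]
    constructor
    · rintro ⟨a, ha, rfl⟩
      exact ⟨Fin.succAbove_ne p a, fun hh => ha (Fin.succAbove_right_injective hh)⟩
    · rintro ⟨hzp, hzq⟩
      obtain ⟨a, rfl⟩ := Fin.exists_succAbove_eq hzp
      exact ⟨a, fun hh => hzq (by rw [hh]), rfl⟩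
  haveI : WellFoundedLT (Fin m) := inferInstance
  apply (StrictMono.range_inj ((Fin.strictMono_succAbove k).comp (Fin.strictMono_succAbove c))
    ((Fin.strictMono_succAbove l).comp (Fin.strictMono_succAbove c'))).1
  rw [Set.range_comp, Set.range_comp, Fin.range_succAbove, Fin.range_succAbove, im, im, h1, h2,
    Set.pair_comm]

lemma cancel_aux {m : ℕ} (Φ : Fin (m+2) → Fin (m+2) → (Fin m → Fin (m+2)) → ℝ)
    (hΦ : ∀ k l e, Φ k l e = Φ l k e) :
    ∑ k : Fin (m+2), ∑ c : Fin (m+1),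
      (-1:ℝ)^((k:ℕ)+(c:ℕ)) * Φ k (k.succAbove c) (k.succAbove ∘ c.succAbove) = 0 := by
  classical
  rw [← Finset.sum_product']
  have hex : ∀ p : Fin (m+2) × Fin (m+1), ∃ z, (p.1.succAbove p.2).succAbove z = p.1 :=
    fun p => Fin.exists_succAbove_eq (Fin.ne_succAbove p.1 p.2)
  set g : Fin (m+2) × Fin (m+1) → Fin (m+2) × Fin (m+1) := fun p =>
    (p.1.succAbove p.2, (hex p).choose) with hg
  have hspec : ∀ p, (g p).1.succAbove (g p).2 = p.1 := fun p => (hex p).choose_spec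
  apply Finset.sum_ninvolution g
  · intro p
    have hsp := hspec p
    have hcomp := succAbove_comp_symm p.1 (p.1.succAbove p.2) p.2 (g p).2 rfl hsp
    have hsgn := sign_succAbove_antisymm p.1 p.2 (g p).2 hsp
    simp only [hg] at hsp hcomp ⊢
    rw [hsp, ← hcomp, hΦ (p.1.succAbove p.2) p.1, hsgn]
    ring
  · intro p _ heq
    exact (Fin.succAbove_ne p.1 p.2) (congrArg Prod.fst heq)
  · intro p; exact Finset.mem_univ _
  · intro p
    have h1 : (g (g p)).1 = p.1 := hspec p
    have h2 : (g (g p)).2 = p.2 := by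
      apply Fin.succAbove_right_injective (p := p.1)
      have h4 := hspec (g p)
      rw [h1] at h4
      exact h4
    exact Prod.ext h1 h2


lemma det_eq_zero_of_col_sums {m : ℕ} (P : Matrix (Fin (m+1)) (Fin (m+1)) ℝ)
    (h : ∀ c, ∑ b, P b c = 0) : P.det = 0 := by
  rw [← Matrix.exists_vecMul_eq_zero_iff]
  refine ⟨fun _ => 1, ?_, ?_⟩
  · intro h0
    have := congrFun h0 0
    simp at this
  · funext c
    simp [Matrix.vecMul, dotProduct, h c]

lemma alt_sum_det_submatrix {m : ℕ} (N : Matrix (Fin (m+1)) (Fin m) ℝ)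
    (hN : ∀ c, ∑ b, N b c = 0) (u : Fin (m+1) → ℝ) (hu : ∑ b, u b = 0) :
    ∑ i : Fin (m+1), (-1:ℝ)^(i:ℕ) * u i * (N.submatrix i.succAbove id).det = 0 := by
  classical
  set P : Matrix (Fin (m+1)) (Fin (m+1)) ℝ :=
    Matrix.of fun b c => Fin.cases (u b) (fun c' => N b c') c with hP
  have h0 : P.det = 0 := by
    apply det_eq_zero_of_col_sums
    intro c
    induction c using Fin.cases with
    | zero => simpa [hP] using hu
    | succ c' => simpa [hP] using hN c'
  calc ∑ i : Fin (m+1), (-1:ℝ)^(i:ℕ) * u i * (N.submatrix i.succAbove id).det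
      = ∑ i : Fin (m+1), (-1:ℝ)^(i:ℕ) * P i 0 * (P.submatrix i.succAbove Fin.succ).det := by
        refine Finset.sum_congr rfl fun i _ => ?_
        have e1 : P i 0 = u i := by simp [hP]
        have e2 : P.submatrix i.succAbove Fin.succ = N.submatrix i.succAbove id := by
          ext a b; simp [hP, Matrix.submatrix_apply]
        rw [e1, e2]
    _ = P.det := (Matrix.det_succ_column_zero P).symm
    _ = 0 := h0


lemma hasFDerivAt_coeff_det {m : ℕ} {x : E} (f : E → ℝ) (f' : E →L[ℝ] ℝ)
    (hf : HasFDerivAt f f' x) (g : Fin m → E → ℝ) (H : Fin m → E →L[ℝ] E →L[ℝ] ℝ)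
    (hg : ∀ t, HasFDerivAt (fun y => fderiv ℝ (g t) y) (H t) x) (w : Fin m → E) :
    ∃ D : E →L[ℝ] ℝ,
      HasFDerivAt (fun y => f y * Matrix.det (Matrix.of fun t c => fderiv ℝ (g t) y (w c))) D x ∧
      ∀ u, D u = f' u * Matrix.det (Matrix.of fun t c => fderiv ℝ (g t) x (w c))
        + f x * ∑ c, Matrix.det (Matrix.of fun t c' =>
            if c' = c then H t u (w c') else fderiv ℝ (g t) x (w c')) := by
  classical
  have hent : ∀ t c, HasFDerivAt (fun y => fderiv ℝ (g t) y (w c))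
      ((ContinuousLinearMap.apply ℝ ℝ (w c)).comp (H t)) x :=
    fun t c => (ContinuousLinearMap.apply ℝ ℝ (w c)).hasFDerivAt.comp x (hg t)
  have hprod : ∀ σ : Equiv.Perm (Fin m), HasFDerivAt
      (fun y => ∏ c, fderiv ℝ (g (σ c)) y (w c))
      (∑ c, (∏ c' ∈ Finset.univ.erase c, fderiv ℝ (g (σ c')) x (w c')) •
        ((ContinuousLinearMap.apply ℝ ℝ (w c)).comp (H (σ c)))) x :=
    fun σ => HasFDerivAt.finset_prod (fun c _ => hent (σ c) c)
  set Dd : E →L[ℝ] ℝ := ∑ σ : Equiv.Perm (Fin m), ((Equiv.Perm.sign σ : ℤ) : ℝ) •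
      ∑ c, (∏ c' ∈ Finset.univ.erase c, fderiv ℝ (g (σ c')) x (w c')) •
        ((ContinuousLinearMap.apply ℝ ℝ (w c)).comp (H (σ c))) with hDd
  have hdet : HasFDerivAt
      (fun y => Matrix.det (Matrix.of fun t c => fderiv ℝ (g t) y (w c))) Dd x := by
    have heq : (fun y => Matrix.det (Matrix.of fun t c => fderiv ℝ (g t) y (w c)))
        = fun y => ∑ σ : Equiv.Perm (Fin m), ((Equiv.Perm.sign σ : ℤ) : ℝ) *
            ∏ c, fderiv ℝ (g (σ c)) y (w c) := by
      funext y
      rw [Matrix.det_apply']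
      rfl
    rw [heq]
    exact HasFDerivAt.fun_sum fun σ _ => (hprod σ).const_mul _
  -- value of Dd
  have hval : ∀ u : E, Dd u = ∑ c, Matrix.det (Matrix.of fun t c' =>
      if c' = c then H t u (w c') else fderiv ℝ (g t) x (w c')) := by
    intro u
    have hdc : ∀ c : Fin m,
        Matrix.det (Matrix.of fun t c' =>
          if c' = c then H t u (w c') else fderiv ℝ (g t) x (w c'))
        = ∑ σ : Equiv.Perm (Fin m), ((Equiv.Perm.sign σ : ℤ) : ℝ) *
            ((∏ c' ∈ Finset.univ.erase c, fderiv ℝ (g (σ c')) x (w c')) * (H (σ c) u (w c))) := by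
      intro c
      rw [Matrix.det_apply']
      refine Finset.sum_congr rfl fun σ _ => ?_
      congr 1
      rw [← Finset.mul_prod_erase Finset.univ _ (Finset.mem_univ c)]
      simp only [Matrix.of_apply, if_pos rfl]
      rw [mul_comm]
      congr 1
      exact Finset.prod_congr rfl fun c' hc' => by
        rw [if_neg (Finset.ne_of_mem_erase hc')]
    rw [hDd]
    simp only [ContinuousLinearMap.sum_apply, ContinuousLinearMap.smul_apply, smul_eq_mul,
      ContinuousLinearMap.comp_apply, ContinuousLinearMap.apply_apply]
    rw [eq_comm]
    calc ∑ c, Matrix.det (Matrix.of fun t c' =>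
          if c' = c then H t u (w c') else fderiv ℝ (g t) x (w c'))
        = ∑ c, ∑ σ : Equiv.Perm (Fin m), ((Equiv.Perm.sign σ : ℤ) : ℝ) *
            ((∏ c' ∈ Finset.univ.erase c, fderiv ℝ (g (σ c')) x (w c')) * (H (σ c) u (w c))) :=
          Finset.sum_congr rfl fun c _ => hdc c
      _ = ∑ σ : Equiv.Perm (Fin m), ∑ c, ((Equiv.Perm.sign σ : ℤ) : ℝ) *
            ((∏ c' ∈ Finset.univ.erase c, fderiv ℝ (g (σ c')) x (w c')) * (H (σ c) u (w c))) :=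
          Finset.sum_comm
      _ = ∑ σ : Equiv.Perm (Fin m), ((Equiv.Perm.sign σ : ℤ) : ℝ) *
            ∑ c, ((∏ c' ∈ Finset.univ.erase c, fderiv ℝ (g (σ c')) x (w c')) * (H (σ c) u (w c))) := by
          refine Finset.sum_congr rfl fun σ _ => ?_
          rw [Finset.mul_sum]
  refine ⟨f x • Dd + (Matrix.det (Matrix.of fun t c => fderiv ℝ (g t) x (w c))) • f',
    hf.mul hdet, ?_⟩
  intro u
  rw [ContinuousLinearMap.add_apply, ContinuousLinearMap.smul_apply,
    ContinuousLinearMap.smul_apply, smul_eq_mul, smul_eq_mul, hval u]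
  ring


lemma key1_aux {r : ℕ} (Lb : Fin (r+1) → E →L[ℝ] ℝ) (v : Fin (r+1) → E) :
    ∑ j : Fin (r+1), ∑ k : Fin (r+1), (-1:ℝ)^((j:ℕ)+(k:ℕ)) *
      (Lb j (v k) *
        Matrix.det (Matrix.of fun t c : Fin r => Lb (j.succAbove t) (v (k.succAbove c))))
    = ((r:ℝ)+1) * Matrix.det (Matrix.of fun t c : Fin (r+1) => Lb t (v c)) := by
  have hrow : ∀ j : Fin (r+1),
      ∑ k : Fin (r+1), (-1:ℝ)^((j:ℕ)+(k:ℕ)) *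
        (Lb j (v k) *
          Matrix.det (Matrix.of fun t c : Fin r => Lb (j.succAbove t) (v (k.succAbove c))))
      = Matrix.det (Matrix.of fun t c : Fin (r+1) => Lb t (v c)) := by
    intro j
    rw [Matrix.det_succ_row (Matrix.of fun t c : Fin (r+1) => Lb t (v c)) j]
    refine Finset.sum_congr rfl fun k _ => ?_
    have e2 : (Matrix.of fun t c : Fin (r+1) => Lb t (v c)).submatrix j.succAbove k.succAbove
        = Matrix.of fun t c : Fin r => Lb (j.succAbove t) (v (k.succAbove c)) := by
      ext p q; simp [Matrix.submatrix_apply]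
    rw [e2, Matrix.of_apply]
    ring
  rw [Finset.sum_congr rfl fun j _ => hrow j, Finset.sum_const, Finset.card_univ,
    Fintype.card_fin, nsmul_eq_mul]
  push_cast
  ring

lemma key2_aux {r : ℕ} (Hb : Fin r → E →L[ℝ] E →L[ℝ] ℝ) (Lb : Fin r → E →L[ℝ] ℝ)
    (hsymm : ∀ t e e', Hb t e e' = Hb t e' e) (v : Fin (r+1) → E) :
    ∑ k : Fin (r+1), (-1:ℝ)^(k:ℕ) * ∑ c : Fin r,
      Matrix.det (Matrix.of fun t c' : Fin r =>
        if c' = c then Hb t (v k) (v (k.succAbove c')) else Lb t (v (k.succAbove c'))) = 0 := by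
  cases r with
  | zero => simp
  | succ m =>
    have expand : ∀ (k : Fin (m+2)) (c : Fin (m+1)),
        Matrix.det (Matrix.of fun t c' : Fin (m+1) =>
          if c' = c then Hb t (v k) (v (k.succAbove c')) else Lb t (v (k.succAbove c')))
        = ∑ t : Fin (m+1), (-1:ℝ)^((t:ℕ)+(c:ℕ)) *
            (Hb t (v k) (v (k.succAbove c)) *
             Matrix.det (Matrix.of fun p q : Fin m =>
               Lb (t.succAbove p) (v ((k.succAbove ∘ c.succAbove) q)))) := by
      intro k c
      rw [Matrix.det_succ_column _ c]
      refine Finset.sum_congr rfl fun t _ => ?_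
      have e1 : (Matrix.of fun t c' : Fin (m+1) =>
          if c' = c then Hb t (v k) (v (k.succAbove c')) else Lb t (v (k.succAbove c'))) t c
          = Hb t (v k) (v (k.succAbove c)) := by simp
      have e2 : (Matrix.of fun t c' : Fin (m+1) =>
          if c' = c then Hb t (v k) (v (k.succAbove c')) else Lb t (v (k.succAbove c'))).submatrix
            t.succAbove c.succAbove
          = Matrix.of fun p q : Fin m => Lb (t.succAbove p) (v ((k.succAbove ∘ c.succAbove) q)) := by
        ext p q
        simp [Matrix.submatrix_apply, Function.comp, if_neg (Fin.succAbove_ne c q)]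
      rw [e1, e2]
      ring
    calc ∑ k : Fin (m+2), (-1:ℝ)^(k:ℕ) * ∑ c : Fin (m+1),
          Matrix.det (Matrix.of fun t c' : Fin (m+1) =>
            if c' = c then Hb t (v k) (v (k.succAbove c')) else Lb t (v (k.succAbove c')))
        = ∑ k : Fin (m+2), ∑ c : Fin (m+1), ∑ t : Fin (m+1), (-1:ℝ)^(t:ℕ) *
            ((-1:ℝ)^((k:ℕ)+(c:ℕ)) * (Hb t (v k) (v (k.succAbove c)) *
             Matrix.det (Matrix.of fun p q : Fin m =>
               Lb (t.succAbove p) (v ((k.succAbove ∘ c.succAbove) q))))) := by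
          refine Finset.sum_congr rfl fun k _ => ?_
          rw [Finset.mul_sum]
          refine Finset.sum_congr rfl fun c _ => ?_
          rw [expand k c, Finset.mul_sum]
          refine Finset.sum_congr rfl fun t _ => ?_
          rw [pow_add, pow_add]
          ring
      _ = ∑ t : Fin (m+1), ∑ k : Fin (m+2), ∑ c : Fin (m+1), (-1:ℝ)^(t:ℕ) *
            ((-1:ℝ)^((k:ℕ)+(c:ℕ)) * (Hb t (v k) (v (k.succAbove c)) *
             Matrix.det (Matrix.of fun p q : Fin m =>
               Lb (t.succAbove p) (v ((k.succAbove ∘ c.succAbove) q))))) := by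
          exact (Finset.sum_congr rfl fun k _ => Finset.sum_comm).trans Finset.sum_comm
      _ = ∑ t : Fin (m+1), (-1:ℝ)^(t:ℕ) * ∑ k : Fin (m+2), ∑ c : Fin (m+1),
            (-1:ℝ)^((k:ℕ)+(c:ℕ)) * (Hb t (v k) (v (k.succAbove c)) *
             Matrix.det (Matrix.of fun p q : Fin m =>
               Lb (t.succAbove p) (v ((k.succAbove ∘ c.succAbove) q)))) := by
          refine Finset.sum_congr rfl fun t _ => ?_
          rw [Finset.mul_sum]
          refine Finset.sum_congr rfl fun k _ => ?_
          rw [Finset.mul_sum]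
      _ = 0 := by
          refine Finset.sum_eq_zero fun t _ => ?_
          rw [cancel_aux (fun k l e => Hb t (v k) (v l) *
              Matrix.det (Matrix.of fun p q : Fin m => Lb (t.succAbove p) (v (e q))))
              (fun k l e => by (try dsimp only); rw [hsymm]), mul_zero]

lemma key_algebra {r : ℕ} (a : Fin (r+2) → ℝ) (L : Fin (r+2) → E →L[ℝ] ℝ)
    (Hm : Fin (r+2) → E →L[ℝ] E →L[ℝ] ℝ) (v : Fin (r+1) → E)
    (hsymm : ∀ b e e', Hm b e e' = Hm b e' e)
    (hLsum : ∀ e : E, ∑ b, L b e = 0) (hasum : ∑ b, a b = 1) :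
    ∑ k : Fin (r+1), (-1:ℝ)^(k:ℕ) *
      (((r:ℝ)+2)⁻¹ * ∑ i : Fin (r+2), (-1:ℝ)^(i:ℕ) *
        ((r.factorial : ℝ) * ∑ j : Fin (r+1), (-1:ℝ)^(j:ℕ) *
          (L (i.succAbove j) (v k) *
             Matrix.det (Matrix.of fun t c : Fin r =>
               L (i.succAbove (j.succAbove t)) (v (k.succAbove c)))
           + a (i.succAbove j) *
             ∑ c : Fin r, Matrix.det (Matrix.of fun t c' : Fin r =>
               if c' = c then Hm (i.succAbove (j.succAbove t)) (v k) (v (k.succAbove c'))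
               else L (i.succAbove (j.succAbove t)) (v (k.succAbove c')))))) =
    ((r+1).factorial : ℝ) * ∑ i : Fin (r+2), (-1:ℝ)^(i:ℕ) * a i *
      Matrix.det (Matrix.of fun t c : Fin (r+1) => L (i.succAbove t) (v c)) := by
  classical
  have KEY3 : ∑ i : Fin (r+2), (-1:ℝ)^(i:ℕ) * ((a i - ((r:ℝ)+2)⁻¹) *
      Matrix.det (Matrix.of fun t c : Fin (r+1) => L (i.succAbove t) (v c))) = 0 := by
    have husum : ∑ b : Fin (r+2), (a b - ((r:ℝ)+2)⁻¹) = 0 := by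
      rw [Finset.sum_sub_distrib, hasum, Finset.sum_const, Finset.card_univ, Fintype.card_fin,
        nsmul_eq_mul]
      have h2 : ((r:ℝ)+2) ≠ 0 := by positivity
      push_cast
      field_simp
      ring
    have h := alt_sum_det_submatrix (Matrix.of fun (b : Fin (r+2)) (c : Fin (r+1)) => L b (v c))
      (fun c => by simpa using hLsum (v c)) (fun b => a b - ((r:ℝ)+2)⁻¹) husum
    calc ∑ i : Fin (r+2), (-1:ℝ)^(i:ℕ) * ((a i - ((r:ℝ)+2)⁻¹) *
          Matrix.det (Matrix.of fun t c : Fin (r+1) => L (i.succAbove t) (v c)))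
        = ∑ i : Fin (r+2), (-1:ℝ)^(i:ℕ) * (a i - ((r:ℝ)+2)⁻¹) *
            ((Matrix.of fun (b : Fin (r+2)) (c : Fin (r+1)) => L b (v c)).submatrix
              i.succAbove id).det := by
          refine Finset.sum_congr rfl fun i _ => ?_
          have e : (Matrix.of fun (b : Fin (r+2)) (c : Fin (r+1)) => L b (v c)).submatrix
              i.succAbove id = Matrix.of fun t c : Fin (r+1) => L (i.succAbove t) (v c) := by
            ext p q; simp [Matrix.submatrix_apply]
          rw [e]; ring
      _ = 0 := h
  have KEY2 : ∀ (i : Fin (r+2)) (j : Fin (r+1)),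
      ∑ k : Fin (r+1), (-1:ℝ)^(k:ℕ) * ∑ c : Fin r,
        Matrix.det (Matrix.of fun t c' : Fin r =>
          if c' = c then Hm (i.succAbove (j.succAbove t)) (v k) (v (k.succAbove c'))
          else L (i.succAbove (j.succAbove t)) (v (k.succAbove c'))) = 0 :=
    fun i j => key2_aux (fun t => Hm (i.succAbove (j.succAbove t)))
      (fun t => L (i.succAbove (j.succAbove t))) (fun t => hsymm _) v
  have hk : ∀ k : Fin (r+1), (-1:ℝ)^(k:ℕ) *
      (((r:ℝ)+2)⁻¹ * ∑ i : Fin (r+2), (-1:ℝ)^(i:ℕ) *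
        ((r.factorial : ℝ) * ∑ j : Fin (r+1), (-1:ℝ)^(j:ℕ) *
          (L (i.succAbove j) (v k) *
             Matrix.det (Matrix.of fun t c : Fin r =>
               L (i.succAbove (j.succAbove t)) (v (k.succAbove c)))
           + a (i.succAbove j) *
             ∑ c : Fin r, Matrix.det (Matrix.of fun t c' : Fin r =>
               if c' = c then Hm (i.succAbove (j.succAbove t)) (v k) (v (k.succAbove c'))
               else L (i.succAbove (j.succAbove t)) (v (k.succAbove c'))))))
      = ∑ i : Fin (r+2), ∑ j : Fin (r+1),
          ((((r:ℝ)+2)⁻¹ * (r.factorial : ℝ)) * ((-1:ℝ)^(i:ℕ) * ((-1:ℝ)^((j:ℕ)+(k:ℕ)) *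
            (L (i.succAbove j) (v k) *
             Matrix.det (Matrix.of fun t c : Fin r =>
               L (i.succAbove (j.succAbove t)) (v (k.succAbove c))))))
           + (((r:ℝ)+2)⁻¹ * (r.factorial : ℝ) * ((-1:ℝ)^(i:ℕ) * (-1:ℝ)^(j:ℕ) * a (i.succAbove j))) *
             ((-1:ℝ)^(k:ℕ) * ∑ c : Fin r, Matrix.det (Matrix.of fun t c' : Fin r =>
               if c' = c then Hm (i.succAbove (j.succAbove t)) (v k) (v (k.succAbove c'))
               else L (i.succAbove (j.succAbove t)) (v (k.succAbove c'))))) := by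
    intro k
    rw [Finset.mul_sum, Finset.mul_sum]
    refine Finset.sum_congr rfl fun i _ => ?_
    rw [Finset.mul_sum, Finset.mul_sum, Finset.mul_sum, Finset.mul_sum]
    refine Finset.sum_congr rfl fun j _ => ?_
    rw [pow_add]
    ring
  refine (Finset.sum_congr rfl fun k _ => hk k).trans ?_
  refine ((Finset.sum_comm).trans (Finset.sum_congr rfl fun i _ => Finset.sum_comm)).trans ?_
  simp only [Finset.sum_add_distrib]
  have hzero : (∑ i : Fin (r+2), ∑ j : Fin (r+1), ∑ k : Fin (r+1),
      (((r:ℝ)+2)⁻¹ * (r.factorial : ℝ) * ((-1:ℝ)^(i:ℕ) * (-1:ℝ)^(j:ℕ) * a (i.succAbove j))) *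
        ((-1:ℝ)^(k:ℕ) * ∑ c : Fin r, Matrix.det (Matrix.of fun t c' : Fin r =>
          if c' = c then Hm (i.succAbove (j.succAbove t)) (v k) (v (k.succAbove c'))
          else L (i.succAbove (j.succAbove t)) (v (k.succAbove c'))))) = 0 := by
    refine Finset.sum_eq_zero fun i _ => Finset.sum_eq_zero fun j _ => ?_
    rw [← Finset.mul_sum, KEY2 i j, mul_zero]
  rw [hzero, add_zero]
  have hpull : ∀ i : Fin (r+2),
      (((r:ℝ)+2)⁻¹ * (r.factorial : ℝ)) * ((-1:ℝ)^(i:ℕ) *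
        ∑ j : Fin (r+1), ∑ k : Fin (r+1), (-1:ℝ)^((j:ℕ)+(k:ℕ)) *
          (L (i.succAbove j) (v k) *
           Matrix.det (Matrix.of fun t c : Fin r =>
             L (i.succAbove (j.succAbove t)) (v (k.succAbove c)))))
      = ∑ j : Fin (r+1), ∑ k : Fin (r+1),
          (((r:ℝ)+2)⁻¹ * (r.factorial : ℝ)) * ((-1:ℝ)^(i:ℕ) * ((-1:ℝ)^((j:ℕ)+(k:ℕ)) *
            (L (i.succAbove j) (v k) *
             Matrix.det (Matrix.of fun t c : Fin r =>
               L (i.succAbove (j.succAbove t)) (v (k.succAbove c)))))) := by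
    intro i
    rw [Finset.mul_sum, Finset.mul_sum]
    refine Finset.sum_congr rfl fun j _ => ?_
    rw [Finset.mul_sum, Finset.mul_sum]
  refine (Finset.sum_congr rfl fun i _ => ((hpull i).symm.trans (by
    rw [key1_aux (fun t => L (i.succAbove t)) v]))).trans ?_
  have KEY3' : ∑ i : Fin (r+2), (-1:ℝ)^(i:ℕ) * a i *
      Matrix.det (Matrix.of fun t c : Fin (r+1) => L (i.succAbove t) (v c))
      = ((r:ℝ)+2)⁻¹ * ∑ i : Fin (r+2), (-1:ℝ)^(i:ℕ) *
          Matrix.det (Matrix.of fun t c : Fin (r+1) => L (i.succAbove t) (v c)) := by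
    rw [Finset.mul_sum, ← sub_eq_zero, ← Finset.sum_sub_distrib, ← KEY3]
    exact Finset.sum_congr rfl fun i _ => by ring
  rw [KEY3']
  have hL2 : ∑ i : Fin (r+2), (((r:ℝ)+2)⁻¹ * (r.factorial : ℝ)) * ((-1:ℝ)^(i:ℕ) *
      (((r:ℝ)+1) * Matrix.det (Matrix.of fun t c : Fin (r+1) => L (i.succAbove t) (v c))))
      = ((((r:ℝ)+2)⁻¹ * (r.factorial : ℝ)) * ((r:ℝ)+1)) * ∑ i : Fin (r+2),
          (-1:ℝ)^(i:ℕ) * Matrix.det (Matrix.of fun t c : Fin (r+1) => L (i.succAbove t) (v c)) := by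
    rw [Finset.mul_sum]
    exact Finset.sum_congr rfl fun i _ => by ring
  rw [hL2]
  have hfact : (((r+1).factorial : ℕ) : ℝ) = ((r:ℝ)+1) * (r.factorial : ℝ) := by
    rw [Nat.factorial_succ]; push_cast; ring
  rw [hfact]
  ring

end WhitneyAux

/-- for an oriented `(r+1)`-simplex `σ` with barycentric coordinates
`λ_0,…,λ_{r+1}`, whose codimension-1 faces `σ'_i` (omitting vertex `i`) have incidence
numbers `[σ;σ'_i] = (-1)^i`, the form
`∫ω(σ) = (1/(r+2)) Σ_i [σ;σ'_i] ω(σ'_i;σ)` satisfies `d(∫ω(σ)) = ω(σ)`. -/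
theorem extDeriv_whitneyIntegral {r : ℕ} (lam : Fin (r + 2) → E → ℝ) (s : Set E)
    (hs : IsOpen s) (hsmooth : ∀ i, ContDiffOn ℝ (⊤ : ℕ∞) (lam i) s)
    (hsum : ∀ y ∈ s, ∑ i, lam i y = 1) (x : E) (hx : x ∈ s)
    (v : Fin (r + 1) → E) :
    extDerivAt
      (fun y w =>
        ((r : ℝ) + 2)⁻¹ *
          ∑ i : Fin (r + 2), (-1 : ℝ) ^ (i : ℕ) *
            whitneyForm (fun j : Fin (r + 1) => lam (i.succAbove j)) y w)
      x v = whitneyForm lam x v := by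
  classical
  have hmem : s ∈ nhds x := hs.mem_nhds hx
  have hca : ∀ (b : Fin (r+2)) (y : E), y ∈ s → ContDiffAt ℝ (⊤ : ℕ∞) (lam b) y :=
    fun b y hy => (hsmooth b).contDiffAt (hs.mem_nhds hy)
  have hder : ∀ b, HasFDerivAt (lam b) (fderiv ℝ (lam b) x) x :=
    fun b => ((hca b x hx).differentiableAt (by simp)).hasFDerivAt
  have hder2 : ∀ b, HasFDerivAt (fun y => fderiv ℝ (lam b) y)
      (fderiv ℝ (fun y => fderiv ℝ (lam b) y) x) x := by
    intro b
    have h1 : ContDiffAt ℝ 1 (fderiv ℝ (lam b)) x := (hca b x hx).fderiv_right (WithTop.coe_le_coe.mpr le_top)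
    exact (h1.differentiableAt one_ne_zero).hasFDerivAt
  have hsymm : ∀ (b : Fin (r+2)) (u u' : E),
      fderiv ℝ (fun y => fderiv ℝ (lam b) y) x u u'
      = fderiv ℝ (fun y => fderiv ℝ (lam b) y) x u' u := by
    intro b u u'
    refine second_derivative_symmetric_of_eventually (f := lam b) ?_ (hder2 b) u u'
    filter_upwards [hmem] with y hy
    exact ((hca b y hy).differentiableAt (by simp)).hasFDerivAt
  have hLsum : ∀ e : E, ∑ b, fderiv ℝ (lam b) x e = 0 := by
    have hd : ∀ b, DifferentiableAt ℝ (lam b) x := fun b => (hca b x hx).differentiableAt (by simp)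
    have h2 : fderiv ℝ (fun y => ∑ b, lam b y) x = ∑ b, fderiv ℝ (lam b) x :=
      fderiv_fun_sum fun b _ => hd b
    have h1 : fderiv ℝ (fun y => ∑ b, lam b y) x = 0 := by
      have heq : (fun y => ∑ b, lam b y) =ᶠ[nhds x] fun _ => (1:ℝ) := by
        filter_upwards [hmem] with y hy
        exact hsum y hy
      rw [heq.fderiv_eq]
      exact fderiv_const_apply 1
    intro e
    have h3 : (∑ b, fderiv ℝ (lam b) x) = (0 : E →L[ℝ] ℝ) := h2.symm.trans h1
    calc ∑ b, fderiv ℝ (lam b) x e = (∑ b, fderiv ℝ (lam b) x) e :=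
          (ContinuousLinearMap.sum_apply _ _ _).symm
      _ = (0 : E →L[ℝ] ℝ) e := by rw [h3]
      _ = 0 := rfl
  have hstep : ∀ k : Fin (r+1),
      fderiv ℝ (fun y => ((r:ℝ) + 2)⁻¹ * ∑ i : Fin (r+2), (-1:ℝ)^(i:ℕ) *
        whitneyForm (fun j : Fin (r+1) => lam (i.succAbove j)) y
          (fun j => v (k.succAbove j))) x (v k)
      = ((r:ℝ)+2)⁻¹ * ∑ i : Fin (r+2), (-1:ℝ)^(i:ℕ) *
          ((r.factorial : ℝ) * ∑ j : Fin (r+1), (-1:ℝ)^(j:ℕ) *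
            (fderiv ℝ (lam (i.succAbove j)) x (v k) *
               Matrix.det (Matrix.of fun t c : Fin r =>
                 fderiv ℝ (lam (i.succAbove (j.succAbove t))) x (v (k.succAbove c)))
             + lam (i.succAbove j) x *
               ∑ c : Fin r, Matrix.det (Matrix.of fun t c' : Fin r =>
                 if c' = c then
                   fderiv ℝ (fun y => fderiv ℝ (lam (i.succAbove (j.succAbove t))) y) x
                     (v k) (v (k.succAbove c'))
                 else fderiv ℝ (lam (i.succAbove (j.succAbove t))) x (v (k.succAbove c'))))) := by
    intro k
    have hex : ∀ (i : Fin (r+2)) (j : Fin (r+1)), ∃ D : E →L[ℝ] ℝ,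
        HasFDerivAt (fun y => ((-1:ℝ)^(j:ℕ) * lam (i.succAbove j) y) *
          Matrix.det (Matrix.of fun t c : Fin r =>
            fderiv ℝ (lam (i.succAbove (j.succAbove t))) y (v (k.succAbove c)))) D x ∧
        ∀ u, D u = ((-1:ℝ)^(j:ℕ) • fderiv ℝ (lam (i.succAbove j)) x) u *
              Matrix.det (Matrix.of fun t c : Fin r =>
                fderiv ℝ (lam (i.succAbove (j.succAbove t))) x (v (k.succAbove c)))
            + ((-1:ℝ)^(j:ℕ) * lam (i.succAbove j) x) *
              ∑ c : Fin r, Matrix.det (Matrix.of fun t c' : Fin r =>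
                if c' = c then
                  fderiv ℝ (fun y => fderiv ℝ (lam (i.succAbove (j.succAbove t))) y) x
                    u (v (k.succAbove c'))
                else fderiv ℝ (lam (i.succAbove (j.succAbove t))) x (v (k.succAbove c'))) :=
      fun i j => WhitneyAux.hasFDerivAt_coeff_det _ _
        ((hder (i.succAbove j)).const_mul ((-1:ℝ)^(j:ℕ)))
        (fun t => lam (i.succAbove (j.succAbove t)))
        (fun t => fderiv ℝ (fun y => fderiv ℝ (lam (i.succAbove (j.succAbove t))) y) x)
        (fun t => hder2 _) (fun c => v (k.succAbove c))
    choose D hD hDval using hex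
    have hbig : HasFDerivAt (fun y => ((r:ℝ)+2)⁻¹ * ∑ i : Fin (r+2), (-1:ℝ)^(i:ℕ) *
        whitneyForm (fun j : Fin (r+1) => lam (i.succAbove j)) y (fun j => v (k.succAbove j)))
        ((((r:ℝ)+2)⁻¹ : ℝ) • ∑ i : Fin (r+2), ((-1:ℝ)^(i:ℕ)) •
          ((r.factorial : ℝ) • ∑ j : Fin (r+1), D i j)) x := by
      refine HasFDerivAt.const_mul ?_ _
      refine HasFDerivAt.fun_sum fun i _ => ?_
      refine HasFDerivAt.const_mul ?_ _
      have heq : (fun y => whitneyForm (fun j : Fin (r+1) => lam (i.succAbove j)) y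
            (fun j => v (k.succAbove j)))
          = fun y => (r.factorial : ℝ) * ∑ j : Fin (r+1),
              ((-1:ℝ)^(j:ℕ) * lam (i.succAbove j) y) *
              Matrix.det (Matrix.of fun t c : Fin r =>
                fderiv ℝ (lam (i.succAbove (j.succAbove t))) y (v (k.succAbove c))) := rfl
      rw [heq]
      exact (HasFDerivAt.fun_sum fun j _ => hD i j).const_mul _
    rw [hbig.fderiv]
    simp only [ContinuousLinearMap.smul_apply, ContinuousLinearMap.sum_apply, smul_eq_mul]
    congr 1
    refine Finset.sum_congr rfl fun i _ => ?_
    congr 1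
    congr 1
    refine Finset.sum_congr rfl fun j _ => ?_
    rw [hDval i j (v k)]
    simp only [ContinuousLinearMap.smul_apply, smul_eq_mul]
    ring
  simp only [extDerivAt]
  refine Eq.trans (Finset.sum_congr rfl fun k _ =>
    congrArg (fun z => (-1:ℝ)^((k : Fin (r+1)):ℕ) * z) (hstep k)) ?_
  rw [show whitneyForm lam x v = ((r+1).factorial : ℝ) * ∑ i : Fin (r+2), (-1:ℝ)^(i:ℕ) *
      lam i x * Matrix.det (Matrix.of fun t c : Fin (r+1) =>
        fderiv ℝ (lam (i.succAbove t)) x (v c)) from rfl]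
  exact WhitneyAux.key_algebra (fun b => lam b x) (fun b => fderiv ℝ (lam b) x)
    (fun b => fderiv ℝ (fun y => fderiv ℝ (lam b) y) x) v hsymm hLsum (hsum x hx)
end

section
/- Let γ be the face of a p-simplex σ spanned by vertices with barycentric coordinates λ_0,…,λ_ℓ, and for h = ℓ+1,…,p let φ_h be the face spanned by λ_0,…,λ_ℓ,λ_h. Then Σ_{h=ℓ+1}^p ω(φ_h;σ) = (-1)^{ℓ+1} (ℓ+1)! dλ_0 ∧ ⋯ ∧ dλ_ℓ, where ω(φ_h;σ) denotes the canonical extension to σ of the Whitney form of φ_h. -/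
open scoped BigOperators

variable {E : Type*} [NormedAddCommGroup E] [NormedSpace ℝ E]


lemma det_updateRow_finsum {n : Type*} [DecidableEq n] [Fintype n]
    {ι : Type*} (M : Matrix n n ℝ) (j : n) (u : ι → n → ℝ) (s : Finset ι) :
    (M.updateRow j (∑ i ∈ s, u i)).det = ∑ i ∈ s, (M.updateRow j (u i)).det := by
  classical
  induction s using Finset.induction_on with
  | empty =>
      rw [Finset.sum_empty, Finset.sum_empty]
      exact Matrix.det_eq_zero_of_row_eq_zero j (by simp)
  | insert _ _ hk ih =>
      rw [Finset.sum_insert hk, Finset.sum_insert hk, Matrix.det_updateRow_add, ih]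

lemma alg_key {ℓ m : ℕ} (a : Fin (ℓ + 1) → ℝ) (A : Fin (ℓ + 1) → Fin (ℓ + 1) → ℝ)
    (b : Fin (m + 1) → ℝ) (W : Fin (m + 1) → Fin (ℓ + 1) → ℝ)
    (hb : ∑ h, b h = 1 - ∑ j, a j)
    (hW : ∀ c, ∑ h, W h c = -∑ j, A j c) :
    ∑ h : Fin (m + 1), ∑ i : Fin (ℓ + 2), (-1 : ℝ) ^ (i : ℕ) * (Fin.snoc a (b h) : Fin (ℓ + 2) → ℝ) i *
      Matrix.det (Matrix.of fun r c : Fin (ℓ + 1) => (Fin.snoc A (W h) : Fin (ℓ + 2) → Fin (ℓ + 1) → ℝ) (i.succAbove r) c) =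
    (-1 : ℝ) ^ (ℓ + 1) * Matrix.det (Matrix.of A) := by
  classical
  -- the big (ℓ+2)×(ℓ+2) matrix with an extra column of values and extra row e₀
  set C : Matrix (Fin (ℓ + 2)) (Fin (ℓ + 2)) ℝ :=
    Matrix.of fun i => Fin.cons ((Fin.snoc a 1 : Fin (ℓ + 2) → ℝ) i) ((Fin.snoc A 0 : Fin (ℓ + 2) → Fin (ℓ + 1) → ℝ) i) with hC
  -- step 1 : each inner sum is a determinant of C with the last row replaced
  have step1 : ∀ h : Fin (m + 1),
      (∑ i : Fin (ℓ + 2), (-1 : ℝ) ^ (i : ℕ) * (Fin.snoc a (b h) : Fin (ℓ + 2) → ℝ) i *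
        Matrix.det (Matrix.of fun r c : Fin (ℓ + 1) => (Fin.snoc A (W h) : Fin (ℓ + 2) → Fin (ℓ + 1) → ℝ) (i.succAbove r) c)) =
      (C.updateRow (Fin.last (ℓ + 1)) (Fin.cons (b h) (W h))).det := by
    intro h
    rw [Matrix.det_succ_column_zero]
    refine (Finset.sum_congr rfl fun i _ => ?_).symm
    have hrow : ∀ i : Fin (ℓ + 2),
        (C.updateRow (Fin.last (ℓ + 1)) (Fin.cons (b h) (W h))) i =
          Fin.cons ((Fin.snoc a (b h) : Fin (ℓ + 2) → ℝ) i) ((Fin.snoc A (W h) : Fin (ℓ + 2) → Fin (ℓ + 1) → ℝ) i) := by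
      intro i
      induction i using Fin.lastCases with
      | last => simp
      | cast j =>
          rw [Matrix.updateRow_ne (Fin.castSucc_lt_last j).ne]
          funext c
          simp [hC]
    congr 1
    · rw [hrow]; simp
    · congr 1
      ext r c
      simp [Matrix.submatrix, hrow]
  rw [Finset.sum_congr rfl fun h _ => step1 h, ← det_updateRow_finsum]
  -- step 2 : identify the summed row as a linear combination of rows of C
  have hcomb : (∑ h : Fin (m + 1), Fin.cons (b h) (W h) : Fin (ℓ + 2) → ℝ) =
      ∑ k : Fin (ℓ + 2), ((Fin.snoc (fun _ : Fin (ℓ + 1) => (-1 : ℝ)) 1 : Fin (ℓ + 2) → ℝ) k) • C k := by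
    funext c
    rw [Finset.sum_apply, Finset.sum_apply]
    rw [Fin.sum_univ_castSucc (f := fun k => (((Fin.snoc (fun _ : Fin (ℓ + 1) => (-1 : ℝ)) 1 : Fin (ℓ + 2) → ℝ) k) • C k) c)]
    induction c using Fin.cases with
    | zero => simp [hC, hb]; try ring
    | succ c' => simp [hC, hW c']; try ring
  rw [hcomb, Matrix.det_updateRow_sum]
  -- step 3 : compute det C by expansion along the last row
  have hClast : C.det = (-1 : ℝ) ^ (ℓ + 1) * Matrix.det (Matrix.of A) := by
    rw [Matrix.det_succ_row C (Fin.last (ℓ + 1))]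
    rw [Fintype.sum_eq_single (0 : Fin (ℓ + 2))]
    · have hsub : C.submatrix (Fin.last (ℓ + 1)).succAbove (0 : Fin (ℓ + 2)).succAbove
          = Matrix.of A := by
        ext r c
        simp [hC, Matrix.submatrix, Fin.succAbove_last, Fin.succAbove_zero]
      rw [hsub]
      simp [hC]
    · intro c hc
      obtain ⟨c', rfl⟩ := Fin.eq_succ_of_ne_zero hc
      simp [hC]
  rw [hClast]
  simp

lemma sum_fin_split {ℓ m : ℕ} {M : Type*} [AddCommMonoid M] (g : Fin (ℓ + m + 2) → M) :
    ∑ i, g i = (∑ j : Fin (ℓ + 1), g (Fin.castLE (le_of_lt (by omega)) j)) +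
      ∑ h : Fin (m + 1), g ⟨ℓ + 1 + (h : ℕ), by omega⟩ := by
  have h : (ℓ + 1) + (m + 1) = ℓ + m + 2 := by omega
  rw [show (∑ i, g i) = ∑ i : Fin ((ℓ + 1) + (m + 1)), g (Fin.cast h i) from
    (Fintype.sum_equiv (finCongr h) _ _ fun i => rfl).symm, Fin.sum_univ_add]
  congr 1


/-- Lemma `satrap`: on a `p`-simplex `σ` (`p = ℓ + m + 1`) with
barycentric coordinates `λ_0,…,λ_p`, let `γ` be the face spanned by `λ_0,…,λ_ℓ` and,
for `h = ℓ+1,…,p`, let `φ_h` be the face spanned by `λ_0,…,λ_ℓ,λ_h`.  Then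
`Σ_{h=ℓ+1}^p ω(φ_h;σ) = (-1)^{ℓ+1} (ℓ+1)! dλ_0 ∧ ⋯ ∧ dλ_ℓ`. -/
theorem sum_whitneyFaceExt {ℓ m : ℕ} (lam : Fin (ℓ + m + 2) → E → ℝ) (s : Set E)
    (hs : IsOpen s) (hsmooth : ∀ i, ContDiffOn ℝ (⊤ : ℕ∞) (lam i) s)
    (hsum : ∀ y ∈ s, ∑ i, lam i y = 1) (x : E) (hx : x ∈ s)
    (v : Fin (ℓ + 1) → E) :
    (∑ h : Fin (m + 1),
        whitneyForm
          (Fin.snoc (fun i : Fin (ℓ + 1) => lam (Fin.castLE (by omega) i))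
            (lam ⟨ℓ + 1 + (h : ℕ), by have := h.isLt; omega⟩))
          x v) =
      (-1 : ℝ) ^ (ℓ + 1) * (Nat.factorial (ℓ + 1) : ℝ) *
        Matrix.det
          (Matrix.of fun r c : Fin (ℓ + 1) =>
            fderiv ℝ (lam (Fin.castLE (by omega) r)) x (v c)) := by
  simp only [whitneyForm]
  classical
  have hdiff : ∀ i, DifferentiableAt ℝ (lam i) x := fun i =>
    ((hsmooth i).contDiffAt (hs.mem_nhds hx)).differentiableAt (by simp)
  have hfs : (∑ i, fderiv ℝ (lam i) x) = 0 := by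
    have h1 : fderiv ℝ (fun y => ∑ i, lam i y) x = ∑ i, fderiv ℝ (lam i) x :=
      fderiv_fun_sum fun i _ => hdiff i
    have h2 : (fun y => ∑ i, lam i y) =ᶠ[nhds x] fun _ => (1 : ℝ) :=
      Filter.eventuallyEq_of_mem (hs.mem_nhds hx) hsum
    rw [← h1, h2.fderiv_eq]
    simp
  set a : Fin (ℓ + 1) → ℝ := fun j => lam (Fin.castLE (by omega) j) x with ha
  set A : Fin (ℓ + 1) → Fin (ℓ + 1) → ℝ :=
    fun j c => fderiv ℝ (lam (Fin.castLE (by omega) j)) x (v c) with hA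
  set b : Fin (m + 1) → ℝ := fun h => lam ⟨ℓ + 1 + (h : ℕ), by omega⟩ x with hbdef
  set W : Fin (m + 1) → Fin (ℓ + 1) → ℝ :=
    fun h c => fderiv ℝ (lam ⟨ℓ + 1 + (h : ℕ), by omega⟩) x (v c) with hWdef
  have hb : ∑ h, b h = 1 - ∑ j, a j := by
    have := sum_fin_split (fun i => lam i x)
    rw [hsum x hx] at this
    rw [hbdef, ha]
    simp only at this ⊢
    linarith [this]
  have hW : ∀ c, ∑ h, W h c = -∑ j, A j c := by
    intro c
    have := sum_fin_split (fun i => fderiv ℝ (lam i) x (v c))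
    have h0 : (∑ i, fderiv ℝ (lam i) x (v c)) = 0 := by
      rw [← ContinuousLinearMap.sum_apply, hfs]; simp
    rw [h0] at this
    rw [hWdef, hA]
    simp only at this ⊢
    linarith [this]
  rw [← Finset.mul_sum]
  have hface : ∀ (h : Fin (m + 1)) (i : Fin (ℓ + 2)),
      ((Fin.snoc (fun i : Fin (ℓ + 1) => lam (Fin.castLE (by omega) i))
          (lam ⟨ℓ + 1 + (h : ℕ), by omega⟩) : Fin (ℓ + 2) → E → ℝ) i) x
        = (Fin.snoc a (b h) : Fin (ℓ + 2) → ℝ) i := by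
    intro h i
    induction i using Fin.lastCases with
    | last => simp [hbdef]
    | cast j => simp [ha]
  have hface' : ∀ (h : Fin (m + 1)) (i : Fin (ℓ + 2)) (c : Fin (ℓ + 1)),
      fderiv ℝ ((Fin.snoc (fun i : Fin (ℓ + 1) => lam (Fin.castLE (by omega) i))
          (lam ⟨ℓ + 1 + (h : ℕ), by omega⟩) : Fin (ℓ + 2) → E → ℝ) i) x (v c)
        = (Fin.snoc A (W h) : Fin (ℓ + 2) → Fin (ℓ + 1) → ℝ) i c := by
    intro h i c
    induction i using Fin.lastCases with
    | last => simp [hWdef]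
    | cast j => simp [hA]
  calc (Nat.factorial (ℓ + 1) : ℝ) * ∑ h : Fin (m + 1), ∑ i : Fin (ℓ + 2), _
      = (Nat.factorial (ℓ + 1) : ℝ) *
        ∑ h : Fin (m + 1), ∑ i : Fin (ℓ + 2), (-1 : ℝ) ^ (i : ℕ) *
          (Fin.snoc a (b h) : Fin (ℓ + 2) → ℝ) i *
          Matrix.det (Matrix.of fun r c : Fin (ℓ + 1) =>
            (Fin.snoc A (W h) : Fin (ℓ + 2) → Fin (ℓ + 1) → ℝ) (i.succAbove r) c) := by
        congr 1
        refine Finset.sum_congr rfl fun h _ => Finset.sum_congr rfl fun i _ => ?_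
        rw [hface h i]
        congr 2
        ext r c
        rw [Matrix.of_apply, Matrix.of_apply, hface' h (i.succAbove r) c]
    _ = (-1 : ℝ) ^ (ℓ + 1) * (Nat.factorial (ℓ + 1) : ℝ) *
        Matrix.det (Matrix.of A) := by
        rw [alg_key a A b W hb hW]; ring
end

section
/- Let r ≥ 1. If E is a continuous function on the standard simplex σ = { u ∈ ℝ^k : u_i ≥ 0, Σ u_i ≤ 1 }, C^1 in the interior, and satisfies E + (1/r) Σ_{i=1}^k u_i ∂E/∂u_i = 0 in the interior, then E ≡ 0. Consequently the solution of E + (1/r) Σ u_i ∂E/∂u_i = B with E continuous is unique. -/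
/-!
Along a ray the PDE is the Euler relation `r E(v) + DE(v) v = 0`, so `t ↦ t ^ r E(t u)` has zero
derivative on `(0, 1)`. For `u` in the interior of `σ` the whole ray `t u`, `0 < t ≤ 1`, stays in
the interior, and since `r ≥ 1` this function vanishes at `t = 0`; hence `E u = 0`. The interior
of the convex body `σ` is dense in `σ`, so continuity gives `E = 0` on all of `σ`.
-/

open scoped BigOperators

/-- The standard closed simplex `{ u ∈ ℝ^k : u_i ≥ 0, Σ u_i ≤ 1 }`. -/
def stdSimplex' (k : ℕ) : Set (Fin k → ℝ) :=
  {u | (∀ i, 0 ≤ u i) ∧ ∑ i, u i ≤ 1}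

open Set

theorem ContinuousLinearMap.sum_mul_apply_single {ι R : Type*} [Fintype ι] [DecidableEq ι]
    [Semiring R] [TopologicalSpace R] (f : (ι → R) →L[R] R) (u : ι → R) :
    ∑ i, u i * f (Pi.single i 1) = f u := by
  conv_rhs => rw [← Finset.univ_sum_single u, map_sum]
  refine Finset.sum_congr rfl fun i _ => ?_
  rw [← smul_eq_mul, ← map_smul, ← Pi.single_smul, smul_eq_mul, mul_one]

theorem eq_zero_of_euler_identity {F : Type*} [NormedAddCommGroup F] [NormedSpace ℝ F]
    {f : F → ℝ} {n : ℕ} (hn : n ≠ 0) {u : F}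
    (hcont : ContinuousOn (fun t : ℝ => f (t • u)) (Icc 0 1))
    (hdiff : ∀ t ∈ Ioo (0 : ℝ) 1, DifferentiableAt ℝ f (t • u))
    (heuler : ∀ t ∈ Ioo (0 : ℝ) 1, n * f (t • u) + fderiv ℝ f (t • u) (t • u) = 0) :
    f u = 0 := by
  set g : ℝ → ℝ := fun t => t ^ n * f (t • u)
  have hg : ∀ t ∈ Ioo (0 : ℝ) 1, HasDerivAt g 0 t := by
    intro t ht
    have hray : HasDerivAt (fun s : ℝ => f (s • u)) (fderiv ℝ f (t • u) u) t :=
      (hdiff t ht).hasFDerivAt.comp_hasDerivAt t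
        (((hasDerivAt_id t).smul_const u).congr_deriv (one_smul ℝ u))
    refine ((hasDerivAt_pow n t).mul hray).congr_deriv ?_
    obtain ⟨m, rfl⟩ := Nat.exists_eq_succ_of_ne_zero hn
    have h := heuler t ht
    rw [map_smul, smul_eq_mul] at h
    rw [Nat.succ_sub_one, pow_succ]
    linear_combination t ^ m * h
  obtain ⟨c, -, hslope⟩ := exists_hasDerivAt_eq_slope g (fun _ => 0) zero_lt_one
    ((continuousOn_pow n).mul hcont) hg
  simpa [g, hn, eq_comm, sub_eq_zero] using hslope

section Simplex

variable {k : ℕ}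

theorem convex_stdSimplex' : Convex ℝ (stdSimplex' k) := by
  refine fun u hu v hv a b ha hb hab => ⟨fun i => ?_, ?_⟩
  · have := hu.1 i
    have := hv.1 i
    simp only [Pi.add_apply, Pi.smul_apply, smul_eq_mul]
    positivity
  · calc ∑ i, (a • u + b • v) i = a * ∑ i, u i + b * ∑ i, v i := by
          simp [Finset.sum_add_distrib, Finset.mul_sum]
      _ ≤ a * 1 + b * 1 := by gcongr; exacts [hu.2, hv.2]
      _ = 1 := by rw [mul_one, mul_one, hab]

theorem zero_mem_stdSimplex' : (0 : Fin k → ℝ) ∈ stdSimplex' k := by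
  simp [stdSimplex']

theorem smul_mem_stdSimplex' {u : Fin k → ℝ} (hu : u ∈ stdSimplex' k) {t : ℝ}
    (ht : t ∈ Icc 0 1) : t • u ∈ stdSimplex' k :=
  convex_stdSimplex'.smul_mem_of_zero_mem zero_mem_stdSimplex' hu ht

theorem smul_mem_interior_stdSimplex' {u : Fin k → ℝ} (hu : u ∈ interior (stdSimplex' k))
    {t : ℝ} (ht : t ∈ Ioc 0 1) : t • u ∈ interior (stdSimplex' k) := by
  simpa using convex_stdSimplex'.combo_interior_closure_mem_interior hu
    (subset_closure zero_mem_stdSimplex') ht.1 (sub_nonneg.2 ht.2) (add_sub_cancel t 1)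

theorem setOf_pos_sum_lt_one_subset_interior_stdSimplex' :
    {u : Fin k → ℝ | (∀ i, 0 < u i) ∧ ∑ i, u i < 1} ⊆ interior (stdSimplex' k) := by
  refine interior_maximal (fun u hu => ⟨fun i => (hu.1 i).le, hu.2.le⟩) ?_
  simp only [ofPred_and, ofPred_forall]
  exact (isOpen_iInter_of_finite fun i => isOpen_lt continuous_const (continuous_apply i)).inter
    (isOpen_lt (by fun_prop) continuous_const)

theorem interior_stdSimplex'_nonempty : (interior (stdSimplex' k)).Nonempty := by
  refine ⟨fun _ => 1 / (k + 1), setOf_pos_sum_lt_one_subset_interior_stdSimplex'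
    ⟨fun _ => by positivity, ?_⟩⟩
  rw [Finset.sum_const, Finset.card_univ, Fintype.card_fin, nsmul_eq_mul, mul_one_div,
    div_lt_one (by positivity)]
  linarith

theorem stdSimplex'_subset_closure_interior :
    stdSimplex' k ⊆ closure (interior (stdSimplex' k)) := by
  rw [convex_stdSimplex'.closure_interior_eq_closure_of_nonempty_interior
    interior_stdSimplex'_nonempty]
  exact subset_closure

end Simplex

section EulerOp

variable {k : ℕ}

noncomputable def eulerOp (r : ℕ) (E : (Fin k → ℝ) → ℝ) (u : Fin k → ℝ) : ℝ :=
  E u + (r : ℝ)⁻¹ * ∑ i, u i * fderiv ℝ E u (Pi.single i 1)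

theorem eulerOp_eq (r : ℕ) (E : (Fin k → ℝ) → ℝ) (u : Fin k → ℝ) :
    eulerOp r E u = E u + (r : ℝ)⁻¹ * fderiv ℝ E u u := by
  rw [eulerOp, ContinuousLinearMap.sum_mul_apply_single]

theorem eulerOp_sub (r : ℕ) {E₁ E₂ : (Fin k → ℝ) → ℝ} {u : Fin k → ℝ}
    (h₁ : DifferentiableAt ℝ E₁ u) (h₂ : DifferentiableAt ℝ E₂ u) :
    eulerOp r (E₁ - E₂) u = eulerOp r E₁ u - eulerOp r E₂ u := by
  simp only [eulerOp_eq, fderiv_sub h₁ h₂, Pi.sub_apply, sub_apply]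
  ring

variable {r : ℕ} {E : (Fin k → ℝ) → ℝ}

theorem eq_zero_of_mem_interior_of_eulerOp_eq_zero (hr : r ≠ 0)
    (hcont : ContinuousOn E (stdSimplex' k))
    (hdiff : DifferentiableOn ℝ E (interior (stdSimplex' k)))
    (hE : ∀ v ∈ interior (stdSimplex' k), eulerOp r E v = 0) {u : Fin k → ℝ}
    (hu : u ∈ interior (stdSimplex' k)) : E u = 0 := by
  have hray : ∀ t ∈ Ioo (0 : ℝ) 1, t • u ∈ interior (stdSimplex' k) :=
    fun t ht => smul_mem_interior_stdSimplex' hu (Ioo_subset_Ioc_self ht)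
  refine eq_zero_of_euler_identity hr
    (hcont.comp (by fun_prop) fun t ht => smul_mem_stdSimplex' (interior_subset hu) ht)
    (fun t ht => hdiff.differentiableAt (isOpen_interior.mem_nhds (hray t ht))) fun t ht => ?_
  have h := hE _ (hray t ht)
  rw [eulerOp_eq] at h
  have hr' : (r : ℝ) ≠ 0 := Nat.cast_ne_zero.2 hr
  field_simp at h
  linear_combination h

theorem eqOn_zero_of_eulerOp_eq_zero (hr : r ≠ 0) (hcont : ContinuousOn E (stdSimplex' k))
    (hdiff : DifferentiableOn ℝ E (interior (stdSimplex' k)))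
    (hE : ∀ v ∈ interior (stdSimplex' k), eulerOp r E v = 0) :
    EqOn E 0 (stdSimplex' k) :=
  EqOn.of_subset_closure
    (fun _ hu => eq_zero_of_mem_interior_of_eulerOp_eq_zero hr hcont hdiff hE hu)
    hcont continuousOn_const interior_subset stdSimplex'_subset_closure_interior

end EulerOp

/-- Proposition `INTEGRATION`, uniqueness: let `r ≥ 1`.  If `E` is
continuous on the standard simplex `σ ⊂ ℝ^k`, `C¹` in the interior, and satisfies
`E + (1/r) Σ_i u_i ∂E/∂u_i = 0` in the interior, then `E ≡ 0` on `σ`.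
Consequently, a continuous solution of `E + (1/r) Σ u_i ∂E/∂u_i = B` is unique. -/
theorem integration_uniqueness (k r : ℕ) (hr : 1 ≤ r) :
    (∀ E : (Fin k → ℝ) → ℝ,
      ContinuousOn E (stdSimplex' k) →
      ContDiffOn ℝ 1 E (interior (stdSimplex' k)) →
      (∀ u ∈ interior (stdSimplex' k),
        E u + (r : ℝ)⁻¹ * ∑ i, u i * fderiv ℝ E u (Pi.single i 1) = 0) →
      ∀ u ∈ stdSimplex' k, E u = 0) ∧
    ∀ B E₁ E₂ : (Fin k → ℝ) → ℝ,
      ContinuousOn E₁ (stdSimplex' k) → ContinuousOn E₂ (stdSimplex' k) →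
      ContDiffOn ℝ 1 E₁ (interior (stdSimplex' k)) →
      ContDiffOn ℝ 1 E₂ (interior (stdSimplex' k)) →
      (∀ u ∈ interior (stdSimplex' k),
        E₁ u + (r : ℝ)⁻¹ * ∑ i, u i * fderiv ℝ E₁ u (Pi.single i 1) = B u) →
      (∀ u ∈ interior (stdSimplex' k),
        E₂ u + (r : ℝ)⁻¹ * ∑ i, u i * fderiv ℝ E₂ u (Pi.single i 1) = B u) →
      ∀ u ∈ stdSimplex' k, E₁ u = E₂ u := by
  have hr₀ : r ≠ 0 := Nat.one_le_iff_ne_zero.mp hr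
  refine ⟨fun E hcont hC1 hE => eqOn_zero_of_eulerOp_eq_zero hr₀ hcont
    (hC1.differentiableOn one_ne_zero) hE, ?_⟩
  intro B E₁ E₂ hcont₁ hcont₂ hC1₁ hC1₂ hE₁ hE₂ u hu
  have hdiff₁ := hC1₁.differentiableOn one_ne_zero
  have hdiff₂ := hC1₂.differentiableOn one_ne_zero
  have hsub : ∀ v ∈ interior (stdSimplex' k), eulerOp r (E₁ - E₂) v = 0 := fun v hv => by
    rw [eulerOp_sub r (hdiff₁.differentiableAt (isOpen_interior.mem_nhds hv))
      (hdiff₂.differentiableAt (isOpen_interior.mem_nhds hv))]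
    exact sub_eq_zero.mpr ((hE₁ v hv).trans (hE₂ v hv).symm)
  exact sub_eq_zero.mp
    (eqOn_zero_of_eulerOp_eq_zero hr₀ (hcont₁.sub hcont₂) (hdiff₁.sub hdiff₂) hsub hu)
end
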